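/- Let G_1 = (V_1,E_1) and G_2 = (V_2,E_2) be disjoint finite graphs, and let Γ be the two-player zero-sum game with A^1 = A^2 = V_1 ∪ V_2 and u^1 defined as: 0 if the two chosen vertices lie in different graphs; 2 if both in V_1 and adjacent; -1 if both in V_1, distinct or equal, and non-adjacent; -2 if both in V_2 and adjacent; 1 if both in V_2 and non-adjacent; with u^2 = -u^1. If ψ : V_1 → V_2 is a graph isomorphism, then the map swapping the two players and sending v ↦ ψ(v) for v ∈ V_1 and v ↦ ψ^{-1}(v) for v ∈ V_2 (on both action sets) is a game symmetry of Γ. -/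
import Mathlib


/-- Player 1's payoff in the two-player zero-sum game built from two disjoint graphs `G₁, G₂`:
`0` if the chosen vertices lie in different graphs; `2` / `-1` if both lie in `G₁` and are
adjacent / non-adjacent; `-2` / `1` if both lie in `G₂` and are adjacent / non-adjacent. -/
def twoGraphPayoff₁ {V₁ V₂ : Type*} (G₁ : SimpleGraph V₁) (G₂ : SimpleGraph V₂)
    [DecidableRel G₁.Adj] [DecidableRel G₂.Adj] : V₁ ⊕ V₂ → V₁ ⊕ V₂ → ℝ
  | Sum.inl v, Sum.inl w => if G₁.Adj v w then 2 else -1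
  | Sum.inr v, Sum.inr w => if G₂.Adj v w then -2 else 1
  | _, _ => 0

/-- Payoffs of the two-player zero-sum game: both players have action set `V₁ ⊕ V₂`, player 1
receives `twoGraphPayoff₁` and player 2 its negative. -/
def twoGraphPayoff {V₁ V₂ : Type*} (G₁ : SimpleGraph V₁) (G₂ : SimpleGraph V₂)
    [DecidableRel G₁.Adj] [DecidableRel G₂.Adj]
    (i : Fin 2) (a : Fin 2 → V₁ ⊕ V₂) : ℝ :=
  if i = 0 then twoGraphPayoff₁ G₁ G₂ (a 0) (a 1) else -(twoGraphPayoff₁ G₁ G₂ (a 0) (a 1))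

/-- If `ψ : V₁ → V₂` is a graph isomorphism from `G₁` to `G₂`, then the map swapping the two
players and sending `v ↦ ψ v` for `v ∈ V₁` and `v ↦ ψ⁻¹ v` for `v ∈ V₂` (on both action sets)
is a game symmetry of the two-player zero-sum game `Γ` built from `G₁, G₂`. -/
theorem stmt_12 {V₁ V₂ : Type*} (G₁ : SimpleGraph V₁) (G₂ : SimpleGraph V₂)
    [DecidableRel G₁.Adj] [DecidableRel G₂.Adj]
    (ψ : V₁ ≃ V₂) (hψ : ∀ v w : V₁, G₁.Adj v w ↔ G₂.Adj (ψ v) (ψ w)) :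
    ∀ (i : Fin 2) (a : Fin 2 → V₁ ⊕ V₂),
      twoGraphPayoff G₁ G₂ i a =
        twoGraphPayoff G₁ G₂ (Equiv.swap 0 1 i)
          (fun j => Sum.elim (fun v => Sum.inr (ψ v)) (fun w => Sum.inl (ψ.symm w))
            (a (Equiv.swap 0 1 j))) := by

  have key : ∀ x y : V₁ ⊕ V₂,
      twoGraphPayoff₁ G₁ G₂
        (Sum.elim (fun v => Sum.inr (ψ v)) (fun w => Sum.inl (ψ.symm w)) x)
        (Sum.elim (fun v => Sum.inr (ψ v)) (fun w => Sum.inl (ψ.symm w)) y)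
      = -(twoGraphPayoff₁ G₁ G₂ x y) := by
    rintro (v | v) (w | w) <;> simp [twoGraphPayoff₁, ← hψ]
    · split <;> norm_num
    · have := hψ (ψ.symm v) (ψ.symm w)
      simp at this
      by_cases h : G₂.Adj v w <;>
        simp [h, this.2, fun hn => mt this.1 hn]
  have symm : ∀ x y : V₁ ⊕ V₂,
      twoGraphPayoff₁ G₁ G₂ x y = twoGraphPayoff₁ G₁ G₂ y x := by
    rintro (v | v) (w | w) <;> simp [twoGraphPayoff₁, SimpleGraph.adj_comm]
  intro i a
  fin_cases i <;>
    simp [twoGraphPayoff, Equiv.swap_apply_left, Equiv.swap_apply_right, key] <;>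
    exact symm _ _
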